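/- arXiv:1509.03189 — 2 statements merged into one kernel-verified Lean document; each statement's English description precedes it below -/
import Mathlib

section
/- Let u be a nonprincipal ultrafilter on ℕ, let (X_n, B_n, μ_n) be a sequence of probability spaces, and let (X_u, B_u, μ_u) be the Loeb measure space. Then: (1) for every sequence {A_n ∈ B_n}_n, the set [A_n]_u belongs to B_u and μ_u([A_n]_u) = lim_u μ_n(A_n); (2) for every A ∈ B_u there is a sequence {B_n ∈ B_n}_n such that μ_u(A Δ [B_n]_u) = 0. -/
open MeasureTheory Filter Topology
open scoped ENNReal symmDiff



/-! Ultraproducts of sets and the Loeb outer measure. -/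

/-- The equivalence relation on `∀ n, X n` identifying sequences that agree
`u`-almost everywhere. -/
def uRel (u : Ultrafilter ℕ) {X : ℕ → Type*} (x y : ∀ n, X n) : Prop :=
  ∀ᶠ n in (u : Filter ℕ), x n = y n

/-- The (set-theoretic) ultraproduct of the family `X n` with respect to the
ultrafilter `u`: the quotient of `∀ n, X n` by the relation identifying sequences
which agree `u`-almost everywhere. -/
def UProd (u : Ultrafilter ℕ) (X : ℕ → Type*) : Type _ :=
  Quot (uRel u (X := X))

/-- The class `[x_n]_u` of a sequence in the ultraproduct. -/
def uMk (u : Ultrafilter ℕ) {X : ℕ → Type*} (x : ∀ n, X n) : UProd u X :=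
  Quot.mk _ x

/-- The subset `[A_n]_u` of the ultraproduct determined by a sequence of subsets
`A n ⊆ X n`: the set of classes of sequences which belong to `A n` for `u`-almost
every `n`. -/
def uSet (u : Ultrafilter ℕ) {X : ℕ → Type*} (A : ∀ n, Set (X n)) : Set (UProd u X) :=
  {z | ∃ x : ∀ n, X n, uMk u x = z ∧ ∀ᶠ n in (u : Filter ℕ), x n ∈ A n}

/-- The limit of a sequence of extended nonnegative reals along the ultrafilter `u`
(it always exists since `ℝ≥0∞` is a compact Hausdorff space). -/
noncomputable def ulim (u : Ultrafilter ℕ) (f : ℕ → ℝ≥0∞) : ℝ≥0∞ :=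
  (u.map f).lim

/-- The Loeb outer measure `θ` on the ultraproduct: the infimum, over countable
covers of `A` by sets of the form `[B^i_n]_u` with all `B^i_n` measurable, of
`∑ᵢ lim_u μ_n (B^i_n)`. -/
noncomputable def loebOuter (u : Ultrafilter ℕ) {X : ℕ → Type*}
    [∀ n, MeasurableSpace (X n)] (μ : ∀ n, Measure (X n)) (A : Set (UProd u X)) : ℝ≥0∞ :=
  ⨅ (B : ℕ → ∀ n, Set (X n)) (_ : (∀ i n, MeasurableSet (B i n)) ∧
      A ⊆ ⋃ i, uSet u (B i)), ∑' i, ulim u fun n => μ n (B i n)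

/-- Carathéodory measurability with respect to the Loeb outer measure. -/
def LoebMeasurable (u : Ultrafilter ℕ) {X : ℕ → Type*}
    [∀ n, MeasurableSpace (X n)] (μ : ∀ n, Measure (X n)) (A : Set (UProd u X)) : Prop :=
  ∀ S : Set (UProd u X), loebOuter u μ (S ∩ A) + loebOuter u μ (S \ A) ≤ loebOuter u μ S

/-- The map on the ultraproduct induced by a sequence of maps `g n : X n → X n`. -/
def uMap (u : Ultrafilter ℕ) {X : ℕ → Type*} (g : ∀ n, X n → X n) :
    UProd u X → UProd u X :=
  Quot.lift (fun x => uMk u fun n => g n (x n))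
    (fun x y h => Quot.sound (h.mono fun n hn => by simpa using congrArg (g n) hn))

/-! The ultraproduct is countably saturated: if the sets `[C_k]_u` decrease and are all
nonempty, they have a common point, since one can choose indices `M n → ∞` along `u` with
`C_0 n, …, C_(M n) n` all nonempty and pick `x n ∈ C_(M n) n`. So a countable cover of
`[A_n]_u` by sets `[B^i_n]_u` has a finite subcover, which gives `θ [A_n]_u = lim_u μ_n (A_n)`.

For a Carathéodory set `S`, a finite part of a near-optimal cover of `S` is an internal set
`ε`-close to `S`. Internal approximants `D^m` with summable errors form a Cauchy sequence for
`lim_u μ_n (· ∆ ·)`, and the same choice of indices `M n → ∞` yields the limit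
`B_n = D^(M n)_n`, which is at distance `0` from `S`. -/

section Ultralimit

variable {u : Ultrafilter ℕ}

theorem tendsto_ulim (f : ℕ → ℝ≥0∞) : Tendsto f u (𝓝 (ulim u f)) := by
  rw [Tendsto, ← Ultrafilter.coe_map]
  exact (u.map f).le_nhds_lim

theorem ulim_eq_of_tendsto {f : ℕ → ℝ≥0∞} {a : ℝ≥0∞} (h : Tendsto f u (𝓝 a)) :
    ulim u f = a :=
  tendsto_nhds_unique (tendsto_ulim f) h

theorem ulim_mono {f g : ℕ → ℝ≥0∞} (h : f ≤ᶠ[u] g) : ulim u f ≤ ulim u g :=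
  le_of_tendsto_of_tendsto (tendsto_ulim f) (tendsto_ulim g) h

theorem ulim_le {f : ℕ → ℝ≥0∞} {a : ℝ≥0∞} (h : ∀ᶠ n in u, f n ≤ a) : ulim u f ≤ a :=
  le_of_tendsto (tendsto_ulim f) h

theorem ulim_add (f g : ℕ → ℝ≥0∞) : ulim u (fun n => f n + g n) = ulim u f + ulim u g :=
  ulim_eq_of_tendsto ((tendsto_ulim f).add (tendsto_ulim g))

theorem ulim_finset_sum {ι : Type*} (s : Finset ι) (f : ι → ℕ → ℝ≥0∞) :
    ulim u (fun n => ∑ i ∈ s, f i n) = ∑ i ∈ s, ulim u (f i) :=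
  ulim_eq_of_tendsto (tendsto_finsetSum s fun i _ => tendsto_ulim (f i))

end Ultralimit

section Ultraproduct

variable {u : Ultrafilter ℕ} {X : ℕ → Type*}

theorem uRel_equivalence : Equivalence (uRel u (X := X)) where
  refl _ := .of_forall fun _ => rfl
  symm h := h.mono fun _ => Eq.symm
  trans h₁ h₂ := (h₁.and h₂).mono fun _ h => h.1.trans h.2

theorem uMk_eq_iff {x y : ∀ n, X n} : uMk u x = uMk u y ↔ uRel u x y :=
  ⟨fun h => uRel_equivalence.eqvGen_iff.1 (Quot.eqvGen_exact h), Quot.sound⟩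

theorem uMk_surjective : Function.Surjective (uMk u (X := X)) :=
  Quot.exists_rep

theorem mem_uSet_iff {A : ∀ n, Set (X n)} {x : ∀ n, X n} :
    uMk u x ∈ uSet u A ↔ ∀ᶠ n in u, x n ∈ A n := by
  refine ⟨?_, fun h => ⟨x, rfl, h⟩⟩
  rintro ⟨y, hyx, hy⟩
  exact ((uMk_eq_iff.1 hyx).and hy).mono fun n h => h.1 ▸ h.2

theorem uSet_mono {A B : ∀ n, Set (X n)} (h : ∀ n, A n ⊆ B n) : uSet u A ⊆ uSet u B := by
  rintro _ ⟨x, rfl, hx⟩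
  exact ⟨x, rfl, hx.mono fun n hn => h n hn⟩

theorem uSet_univ : uSet u (fun n => (Set.univ : Set (X n))) = Set.univ := by
  ext z
  obtain ⟨x, rfl⟩ := uMk_surjective z
  simp only [mem_uSet_iff, Set.mem_univ, Filter.eventually_true]

theorem uSet_inter (A B : ∀ n, Set (X n)) :
    uSet u (fun n => A n ∩ B n) = uSet u A ∩ uSet u B := by
  ext z
  obtain ⟨x, rfl⟩ := uMk_surjective z
  simp only [Set.mem_inter_iff, mem_uSet_iff, Filter.eventually_and]

theorem uSet_diff (A B : ∀ n, Set (X n)) :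
    uSet u (fun n => A n \ B n) = uSet u A \ uSet u B := by
  ext z
  obtain ⟨x, rfl⟩ := uMk_surjective z
  simp only [Set.mem_sdiff, mem_uSet_iff, Filter.eventually_and, Ultrafilter.eventually_not]

theorem uSet_symmDiff (A B : ∀ n, Set (X n)) :
    uSet u (fun n => A n ∆ B n) = uSet u A ∆ uSet u B := by
  ext z
  obtain ⟨x, rfl⟩ := uMk_surjective z
  simp only [Set.mem_symmDiff, mem_uSet_iff, Ultrafilter.eventually_or, Filter.eventually_and,
    Ultrafilter.eventually_not]

end Ultraproduct

section Saturation

theorem Filter.exists_eventually_ge_and_forall_le {l : Filter ℕ} (hl : l ≤ cofinite)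
    {p : ℕ → ℕ → Prop} (hp : ∀ k, ∀ᶠ n in l, p k n) :
    ∃ M : ℕ → ℕ, ∀ k, ∀ᶠ n in l, k ≤ M n ∧ ∀ j ≤ M n, p j n := by
  classical
  refine ⟨fun n => Nat.findGreatest (fun k => ∀ j ≤ k, p j n) n, fun k => ?_⟩
  have hk : ∀ᶠ n in l, ∀ j ∈ Set.Iic k, p j n :=
    (eventually_all_finite (Set.finite_Iic k)).2 fun j _ => hp j
  have hkn : ∀ᶠ n in l, k ≤ n := hl (Nat.cofinite_eq_atTop ▸ eventually_ge_atTop k)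
  filter_upwards [hk, hkn] with n hk hkn
  exact ⟨Nat.le_findGreatest hkn hk, Nat.findGreatest_spec (P := fun k => ∀ j ≤ k, p j n) hkn hk⟩

variable {X : ℕ → Type*} [∀ n, Nonempty (X n)]

theorem exists_forall_eventually_mem_of_antitone {l : Filter ℕ} (hl : l ≤ cofinite)
    {C : ℕ → ∀ n, Set (X n)} (hC : ∀ n, Antitone fun k => C k n)
    (hne : ∀ k, ∀ᶠ n in l, (C k n).Nonempty) :
    ∃ x : ∀ n, X n, ∀ k, ∀ᶠ n in l, x n ∈ C k n := by
  classical
  obtain ⟨M, hM⟩ := Filter.exists_eventually_ge_and_forall_le hl hne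
  refine ⟨fun n => if h : (C (M n) n).Nonempty then h.some else Classical.arbitrary _,
    fun k => (hM k).mono fun n ⟨hkM, hCM⟩ => ?_⟩
  dsimp only
  rw [dif_pos (hCM _ le_rfl)]
  exact hC n hkM (hCM _ le_rfl).some_mem

variable {u : Ultrafilter ℕ}

theorem exists_eventually_subset_biUnion_of_uSet_subset_iUnion (hu : (u : Filter ℕ) ≤ cofinite)
    {A : ∀ n, Set (X n)} {B : ℕ → ∀ n, Set (X n)} (h : uSet u A ⊆ ⋃ i, uSet u (B i)) :
    ∃ k, ∀ᶠ n in u, A n ⊆ ⋃ i ∈ Finset.range k, B i n := by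
  by_contra! hk
  have hne : ∀ k, ∀ᶠ n in u, (A n \ ⋃ i ∈ Finset.range k, B i n).Nonempty := fun k =>
    (hk k).mono fun _ => Set.sdiff_nonempty.2
  have hanti : ∀ n, Antitone fun k => A n \ ⋃ i ∈ Finset.range k, B i n := fun n _ _ hkl =>
    Set.sdiff_subset_sdiff_right (Set.biUnion_subset_biUnion_left (Finset.range_mono hkl))
  obtain ⟨x, hx⟩ := exists_forall_eventually_mem_of_antitone hu hanti hne
  obtain ⟨i, hi⟩ := Set.mem_iUnion.1 (h (mem_uSet_iff.2 ((hx 0).mono fun _ hn => hn.1)))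
  obtain ⟨n, hn, hBn⟩ := ((hx (i + 1)).and (mem_uSet_iff.1 hi)).exists
  exact hn.2 (Set.mem_biUnion (Finset.self_mem_range_succ i) hBn)

end Saturation

section LoebOuter

variable {u : Ultrafilter ℕ} {X : ℕ → Type*} [∀ n, MeasurableSpace (X n)]
  {μ : ∀ n, Measure (X n)}

theorem loebOuter_le_tsum {A : Set (UProd u X)} {B : ℕ → ∀ n, Set (X n)}
    (hB : ∀ i n, MeasurableSet (B i n)) (hA : A ⊆ ⋃ i, uSet u (B i)) :
    loebOuter u μ A ≤ ∑' i, ulim u fun n => μ n (B i n) :=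
  iInf₂_le B ⟨hB, hA⟩

theorem exists_cover_tsum_lt {A : Set (UProd u X)} {t : ℝ≥0∞} (h : loebOuter u μ A < t) :
    ∃ B : ℕ → ∀ n, Set (X n), (∀ i n, MeasurableSet (B i n)) ∧ A ⊆ ⋃ i, uSet u (B i) ∧
      ∑' i, ulim u (fun n => μ n (B i n)) < t := by
  obtain ⟨B, ⟨hB, hA⟩, hlt⟩ := by simpa only [loebOuter, iInf_lt_iff] using h
  exact ⟨B, hB, hA, hlt⟩

theorem loebOuter_uSet_le {A : ∀ n, Set (X n)} (hA : ∀ n, MeasurableSet (A n)) :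
    loebOuter u μ (uSet u A) ≤ ulim u fun n => μ n (A n) := by
  classical
  let B : ℕ → ∀ n, Set (X n) := fun i n => if i = 0 then A n else ∅
  have hB : ∀ i n, MeasurableSet (B i n) := fun i n => by
    by_cases hi : i = 0 <;> simp [B, hi, hA n]
  refine (loebOuter_le_tsum hB (Set.subset_iUnion (fun i => uSet u (B i)) 0)).trans_eq ?_
  refine (tsum_eq_single 0 fun i hi => ?_).trans (by simp [B])
  exact le_antisymm (ulim_le (.of_forall fun n => by simp [B, hi])) zero_le

theorem loebOuter_mono {A A' : Set (UProd u X)} (h : A ⊆ A') :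
    loebOuter u μ A ≤ loebOuter u μ A' :=
  le_iInf₂ fun _ hB => loebOuter_le_tsum hB.1 (h.trans hB.2)

theorem loebOuter_empty : loebOuter u μ (∅ : Set (UProd u X)) = 0 := by
  refine le_antisymm ?_ zero_le
  calc loebOuter u μ ∅ ≤ loebOuter u μ (uSet u fun _ => ∅) := loebOuter_mono (Set.empty_subset _)
    _ ≤ 0 := (loebOuter_uSet_le fun _ => .empty).trans (ulim_le (.of_forall fun n => by simp))

theorem loebOuter_iUnion_le (A : ℕ → Set (UProd u X)) :
    loebOuter u μ (⋃ i, A i) ≤ ∑' i, loebOuter u μ (A i) := by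
  refine ENNReal.le_of_forall_pos_le_add fun ε hε hfin => ?_
  obtain ⟨δ, hδ, hδε⟩ := ENNReal.exists_pos_sum_of_countable' (ENNReal.coe_ne_zero.2 hε.ne') ℕ
  choose B hBm hAB hBδ using fun i => exists_cover_tsum_lt (μ := μ) (A := A i)
    (ENNReal.lt_add_right (ne_top_of_le_ne_top hfin.ne (ENNReal.le_tsum i)) (hδ i).ne')
  have hcover : ⋃ i, A i ⊆ ⋃ k, uSet u (B (Nat.unpair k).1 (Nat.unpair k).2) := by
    rw [Set.iUnion_unpair (fun i j => uSet u (B i j))]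
    exact Set.iUnion_mono hAB
  calc loebOuter u μ (⋃ i, A i)
      ≤ ∑' k, ulim u fun n => μ n (B (Nat.unpair k).1 (Nat.unpair k).2 n) :=
        loebOuter_le_tsum (fun _ _ => hBm _ _ _) hcover
    _ = ∑' i, ∑' j, ulim u fun n => μ n (B i j n) := by
        rw [← ENNReal.tsum_prod, ← Nat.pairEquiv.symm.tsum_eq]
        rfl
    _ ≤ ∑' i, (loebOuter u μ (A i) + δ i) := ENNReal.tsum_le_tsum fun i => (hBδ i).le
    _ ≤ ∑' i, loebOuter u μ (A i) + ε := by
        rw [ENNReal.tsum_add]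
        gcongr

variable (u μ) in
noncomputable def loebOuterMeasure : OuterMeasure (UProd u X) where
  measureOf := loebOuter u μ
  empty := loebOuter_empty
  mono := loebOuter_mono
  iUnion_nat A _ := loebOuter_iUnion_le A

theorem loebMeasurable_iff_isCaratheodory {S : Set (UProd u X)} :
    LoebMeasurable u μ S ↔ (loebOuterMeasure u μ).IsCaratheodory S :=
  (loebOuterMeasure u μ).isCaratheodory_iff_le'.symm

end LoebOuter

theorem measure_symmDiff_le_add {α F : Type*} [FunLike F (Set α) ℝ≥0∞] [OuterMeasureClass F α]
    (μ : F) (s t u : Set α) : μ (s ∆ u) ≤ μ (s ∆ t) + μ (t ∆ u) :=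
  (measure_mono (symmDiff_triangle s t u)).trans (measure_union_le _ _)

theorem measure_symmDiff_le_sum_Ico {α F : Type*} [FunLike F (Set α) ℝ≥0∞]
    [OuterMeasureClass F α] (μ : F) (s : ℕ → Set α) {m M : ℕ} (h : m ≤ M) :
    μ (s m ∆ s M) ≤ ∑ j ∈ Finset.Ico m M, μ (s j ∆ s (j + 1)) := by
  induction M, h using Nat.le_induction with
  | base => simp
  | succ M hmM ih =>
    rw [Finset.sum_Ico_succ_top hmM]
    exact (measure_symmDiff_le_add μ _ (s M) _).trans (by gcongr)

theorem MeasureTheory.OuterMeasure.IsCaratheodory.measure_symmDiff_add_le {α : Type*}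
    {m : OuterMeasure α} {S : Set α} (hS : m.IsCaratheodory S) (F : Set α) :
    m (S ∆ F) + m S ≤ m F + 2 * m (S \ F) :=
  calc m (S ∆ F) + m S ≤ m (S \ F) + m (F \ S) + (m (S ∩ F) + m (S \ F)) :=
        add_le_add (Set.symmDiff_def S F ▸ measure_union_le _ _)
          (measure_le_inter_add_sdiff _ _ _)
    _ = m F + 2 * m (S \ F) := by
        rw [hS F, Set.inter_comm F S]
        ring

section LoebMeasure

variable {u : Ultrafilter ℕ} {X : ℕ → Type*} [∀ n, MeasurableSpace (X n)]
  {μ : ∀ n, Measure (X n)}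

theorem loebMeasurable_uSet {A : ∀ n, Set (X n)} (hA : ∀ n, MeasurableSet (A n)) :
    LoebMeasurable u μ (uSet u A) := by
  intro S
  refine le_iInf₂ fun B ⟨hBm, hSB⟩ => ?_
  have hinter : S ∩ uSet u A ⊆ ⋃ i, uSet u (fun n => B i n ∩ A n) := by
    simp only [uSet_inter, ← Set.iUnion_inter]
    exact Set.inter_subset_inter_left _ hSB
  have hdiff : S \ uSet u A ⊆ ⋃ i, uSet u (fun n => B i n \ A n) := by
    simp only [uSet_diff, ← Set.iUnion_sdiff]
    exact Set.sdiff_subset_sdiff_left hSB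
  calc loebOuter u μ (S ∩ uSet u A) + loebOuter u μ (S \ uSet u A)
      ≤ (∑' i, ulim u fun n => μ n (B i n ∩ A n)) + ∑' i, ulim u fun n => μ n (B i n \ A n) :=
        add_le_add (loebOuter_le_tsum (fun i n => (hBm i n).inter (hA n)) hinter)
          (loebOuter_le_tsum (fun i n => (hBm i n).diff (hA n)) hdiff)
    _ = ∑' i, ulim u fun n => μ n (B i n) := by
        simp only [← ENNReal.tsum_add, ← ulim_add, measure_inter_add_sdiff _ (hA _)]

theorem loebOuter_symmDiff_le (s t w : Set (UProd u X)) :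
    loebOuter u μ (s ∆ w) ≤ loebOuter u μ (s ∆ t) + loebOuter u μ (t ∆ w) :=
  measure_symmDiff_le_add (loebOuterMeasure u μ) s t w

theorem loebOuter_le_one [∀ n, IsProbabilityMeasure (μ n)] (A : Set (UProd u X)) :
    loebOuter u μ A ≤ 1 :=
  calc loebOuter u μ A ≤ loebOuter u μ (uSet u fun _ => Set.univ) :=
        loebOuter_mono (uSet_univ ▸ Set.subset_univ A)
    _ ≤ 1 := (loebOuter_uSet_le fun _ => .univ).trans (ulim_le (.of_forall fun n => by simp))

theorem exists_uSet_loebOuter_lt_and_diff_lt {S : Set (UProd u X)}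
    (hS : loebOuter u μ S ≠ ∞) {δ : ℝ≥0∞} (hδ : δ ≠ 0) :
    ∃ D : ∀ n, Set (X n), (∀ n, MeasurableSet (D n)) ∧
      loebOuter u μ (uSet u D) < loebOuter u μ S + δ ∧ loebOuter u μ (S \ uSet u D) < δ := by
  obtain ⟨B, hBm, hSB, hBlt⟩ := exists_cover_tsum_lt (ENNReal.lt_add_right hS hδ)
  obtain ⟨k, hk⟩ := ((ENNReal.tendsto_sum_nat_add _ hBlt.ne_top).eventually_lt_const
    (pos_iff_ne_zero.2 hδ)).exists
  have hDm : ∀ n, MeasurableSet (⋃ i ∈ Finset.range k, B i n) := fun n =>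
    Finset.measurableSet_biUnion _ fun i _ => hBm i n
  refine ⟨fun n => ⋃ i ∈ Finset.range k, B i n, hDm, ?_, ?_⟩
  · calc loebOuter u μ (uSet u fun n => ⋃ i ∈ Finset.range k, B i n)
        ≤ ulim u fun n => μ n (⋃ i ∈ Finset.range k, B i n) := loebOuter_uSet_le hDm
      _ ≤ ulim u fun n => ∑ i ∈ Finset.range k, μ n (B i n) :=
          ulim_mono (.of_forall fun n => measure_biUnion_finset_le _ _)
      _ = ∑ i ∈ Finset.range k, ulim u fun n => μ n (B i n) := ulim_finset_sum _ _
      _ ≤ ∑' i, ulim u fun n => μ n (B i n) := ENNReal.sum_le_tsum _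
      _ < loebOuter u μ S + δ := hBlt
  · refine (loebOuter_le_tsum (fun i n => hBm (i + k) n) ?_).trans_lt hk
    rintro z ⟨hzS, hzD⟩
    obtain ⟨i, hi⟩ := Set.mem_iUnion.1 (hSB hzS)
    have hki : k ≤ i := not_lt.1 fun hik =>
      hzD (uSet_mono (fun n => Set.subset_biUnion_of_mem (Finset.mem_range.2 hik)) hi)
    exact Set.mem_iUnion.2 ⟨i - k, by rwa [Nat.sub_add_cancel hki]⟩

theorem exists_uSet_loebOuter_symmDiff_lt {S : Set (UProd u X)} (hS : LoebMeasurable u μ S)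
    (hfin : loebOuter u μ S ≠ ∞) {ε : ℝ≥0∞} (hε : ε ≠ 0) :
    ∃ D : ∀ n, Set (X n), (∀ n, MeasurableSet (D n)) ∧ loebOuter u μ (S ∆ uSet u D) < ε := by
  obtain ⟨δ, hδ, hδε⟩ := ENNReal.exists_nnreal_pos_mul_lt (by norm_num : (3 : ℝ≥0∞) ≠ ∞) hε
  obtain ⟨D, hDm, hD, hSD⟩ :=
    exists_uSet_loebOuter_lt_and_diff_lt hfin (ENNReal.coe_ne_zero.2 hδ.ne')
  refine ⟨D, hDm, lt_of_le_of_lt ?_ hδε⟩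
  refine (ENNReal.add_le_add_iff_right hfin).1 ?_
  calc loebOuter u μ (S ∆ uSet u D) + loebOuter u μ S
      ≤ loebOuter u μ (uSet u D) + 2 * loebOuter u μ (S \ uSet u D) :=
        (loebMeasurable_iff_isCaratheodory.1 hS).measure_symmDiff_add_le (uSet u D)
    _ ≤ loebOuter u μ S + δ + 2 * δ := by gcongr
    _ = δ * 3 + loebOuter u μ S := by ring

theorem exists_tendsto_ulim_measure_symmDiff (hu : (u : Filter ℕ) ≤ cofinite)
    {D : ℕ → ∀ n, Set (X n)} {ε : ℕ → ℝ≥0∞} (hε : ∑' m, ε m ≠ ∞)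
    (hD : ∀ m, (ulim u fun n => μ n (D m n ∆ D (m + 1) n)) < ε m) :
    ∃ M : ℕ → ℕ, Tendsto (fun m => ulim u fun n => μ n (D m n ∆ D (M n) n)) atTop (𝓝 0) := by
  obtain ⟨M, hM⟩ := Filter.exists_eventually_ge_and_forall_le hu fun m =>
    (tendsto_ulim _).eventually_lt_const (hD m)
  refine ⟨M, tendsto_of_tendsto_of_tendsto_of_le_of_le tendsto_const_nhds
    (ENNReal.tendsto_sum_nat_add ε hε) (fun _ => zero_le) fun m => ulim_le ?_⟩
  filter_upwards [hM m] with n ⟨hmM, hclose⟩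
  calc μ n (D m n ∆ D (M n) n) ≤ ∑ j ∈ Finset.Ico m (M n), μ n (D j n ∆ D (j + 1) n) :=
        measure_symmDiff_le_sum_Ico (μ n) (fun j => D j n) hmM
    _ ≤ ∑ j ∈ Finset.Ico m (M n), ε j :=
        Finset.sum_le_sum fun j hj => (hclose j (Finset.mem_Ico.1 hj).2.le).le
    _ = ∑ j ∈ Finset.range (M n - m), ε (j + m) := by
        simp only [Finset.sum_Ico_eq_sum_range, add_comm m]
    _ ≤ ∑' j, ε (j + m) := ENNReal.sum_le_tsum _

variable [∀ n, Nonempty (X n)]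

theorem ulim_le_tsum_of_uSet_subset_iUnion (hu : (u : Filter ℕ) ≤ cofinite)
    {A : ∀ n, Set (X n)} {B : ℕ → ∀ n, Set (X n)} (h : uSet u A ⊆ ⋃ i, uSet u (B i)) :
    (ulim u fun n => μ n (A n)) ≤ ∑' i, ulim u fun n => μ n (B i n) := by
  obtain ⟨k, hk⟩ := exists_eventually_subset_biUnion_of_uSet_subset_iUnion hu h
  calc (ulim u fun n => μ n (A n)) ≤ ulim u fun n => ∑ i ∈ Finset.range k, μ n (B i n) :=
        ulim_mono (hk.mono fun n hn => (measure_mono hn).trans (measure_biUnion_finset_le _ _))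
    _ = ∑ i ∈ Finset.range k, ulim u fun n => μ n (B i n) := ulim_finset_sum _ _
    _ ≤ ∑' i, ulim u fun n => μ n (B i n) := ENNReal.sum_le_tsum _

theorem loebOuter_uSet (hu : (u : Filter ℕ) ≤ cofinite) {A : ∀ n, Set (X n)}
    (hA : ∀ n, MeasurableSet (A n)) : loebOuter u μ (uSet u A) = ulim u fun n => μ n (A n) :=
  le_antisymm (loebOuter_uSet_le hA)
    (le_iInf₂ fun _ hB => ulim_le_tsum_of_uSet_subset_iUnion hu hB.2)

theorem exists_uSet_loebOuter_symmDiff_eq_zero (hu : (u : Filter ℕ) ≤ cofinite)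
    {S : Set (UProd u X)} (hS : LoebMeasurable u μ S) (hfin : loebOuter u μ S ≠ ∞) :
    ∃ B : ∀ n, Set (X n), (∀ n, MeasurableSet (B n)) ∧ loebOuter u μ (S ∆ uSet u B) = 0 := by
  obtain ⟨δ, hδ, hδsum⟩ := ENNReal.exists_pos_sum_of_countable' one_ne_zero ℕ
  have hδfin : ∑' m, δ m ≠ ∞ := (hδsum.trans ENNReal.one_lt_top).ne
  choose D hDm hSD using fun m => exists_uSet_loebOuter_symmDiff_lt hS hfin (hδ m).ne'
  have hulim : ∀ m {B : ∀ n, Set (X n)}, (∀ n, MeasurableSet (B n)) →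
      (ulim u fun n => μ n (D m n ∆ B n)) = loebOuter u μ (uSet u (D m) ∆ uSet u B) :=
    fun m _ hB => by rw [← uSet_symmDiff, loebOuter_uSet hu fun n => (hDm m n).symmDiff (hB n)]
  have hconsec : ∀ m, (ulim u fun n => μ n (D m n ∆ D (m + 1) n)) < δ m + δ (m + 1) := by
    intro m
    rw [hulim m (hDm (m + 1))]
    calc loebOuter u μ (uSet u (D m) ∆ uSet u (D (m + 1)))
        ≤ loebOuter u μ (S ∆ uSet u (D m)) + loebOuter u μ (S ∆ uSet u (D (m + 1))) := by
          rw [symmDiff_comm S]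
          exact loebOuter_symmDiff_le _ S _
      _ < δ m + δ (m + 1) := ENNReal.add_lt_add (hSD m) (hSD (m + 1))
  have hsum : ∑' m, (δ m + δ (m + 1)) ≠ ∞ := by
    rw [ENNReal.tsum_add]
    exact ENNReal.add_ne_top.2 ⟨hδfin, ne_top_of_le_ne_top hδfin
      (ENNReal.tsum_comp_le_tsum_of_injective (add_left_injective 1) δ)⟩
  obtain ⟨M, hM⟩ := exists_tendsto_ulim_measure_symmDiff hu hsum hconsec
  have hlim := (ENNReal.tendsto_atTop_zero_of_tsum_ne_top hδfin).add hM
  rw [add_zero] at hlim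
  refine ⟨fun n => D (M n) n, fun n => hDm (M n) n,
    le_antisymm (ge_of_tendsto' hlim fun m => ?_) zero_le⟩
  rw [hulim m fun n => hDm (M n) n]
  exact (loebOuter_symmDiff_le _ (uSet u (D m)) _).trans (add_le_add (hSD m).le le_rfl)

end LoebMeasure

/-- In the Loeb measure space: (1) every set of the form `[A_n]_u` with
`A_n` measurable is Carathéodory measurable for `θ` and its Loeb measure is
`lim_u μ_n (A_n)`; (2) every Carathéodory measurable set agrees with some `[B_n]_u`
up to a `θ`-null set. -/
theorem loeb_measurable_sets (u : Ultrafilter ℕ) (hu : (u : Filter ℕ) ≤ Filter.cofinite)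
    {X : ℕ → Type*} [∀ n, MeasurableSpace (X n)]
    (μ : ∀ n, Measure (X n)) [∀ n, IsProbabilityMeasure (μ n)] :
    (∀ A : ∀ n, Set (X n), (∀ n, MeasurableSet (A n)) →
      LoebMeasurable u μ (uSet u A) ∧
        loebOuter u μ (uSet u A) = ulim u fun n => μ n (A n)) ∧
    (∀ S : Set (UProd u X), LoebMeasurable u μ S →
      ∃ B : ∀ n, Set (X n), (∀ n, MeasurableSet (B n)) ∧
        loebOuter u μ (S ∆ uSet u B) = 0) := by
  have : ∀ n, Nonempty (X n) := fun n => nonempty_of_isProbabilityMeasure (μ n)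
  refine ⟨fun A hA => ⟨loebMeasurable_uSet hA, loebOuter_uSet hu hA⟩, fun S hS => ?_⟩
  exact exists_uSet_loebOuter_symmDiff_eq_zero hu hS
    ((loebOuter_le_one S).trans_lt ENNReal.one_lt_top).ne
end

section
/- Let a be a pmp action of a countable group G on an atomless probability space (X_a, μ_a). Then there exists a countably generated, G-invariant sub-σ-algebra F of the measurable sets of X_a such that μ_a restricted to F is atomless and the factor action a|_F (the action a viewed on the measure space (X_a, F, μ_a|_F)) is weakly equivalent to a. In particular, every pmp action of G on an atomless probability space is weakly equivalent to a pmp action on a standard atomless probability space. -/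
open MeasureTheory Filter Topology
open scoped ENNReal symmDiff



/-! Probability-measure-preserving actions, partitions, and weak containment. -/

/-- `a` is a probability-measure-preserving (pmp) action of the group `G` on the
measure space `(X, μ)`. -/
def IsPMP {G : Type*} [Group G] {X : Type*} [MeasurableSpace X]
    (μ : Measure X) (a : G → X → X) : Prop :=
  (∀ g : G, MeasurePreserving (a g) μ μ) ∧ (∀ x, a 1 x = x) ∧
    ∀ (g h : G) (x : X), a (g * h) x = a g (a h x)

/-- The translate `g · A` of a subset `A` under the action `a`. -/
def actSet {G X : Type*} (a : G → X → X) (g : G) (A : Set X) : Set X :=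
  a g '' A

/-- An (exact) finite measurable partition of `X` with `k` atoms. -/
def IsPartition {X : Type*} [MeasurableSpace X] {k : ℕ} (P : Fin k → Set X) : Prop :=
  (∀ i, MeasurableSet (P i)) ∧ Pairwise (Function.onFun Disjoint P) ∧ ⋃ i, P i = Set.univ

/-- `‖c(a,F,P) - c(b,F,Q)‖₁ = ∑_{i,j ≤ k} ∑_{f ∈ F} |μ(Pᵢ ∩ f·Pⱼ) - ν(Qᵢ ∩ f·Qⱼ)|`,
the `ℓ¹`-distance between the `F`-statistics of the two partitions. -/
noncomputable def statDist {G : Type*} {X Y : Type*} [MeasurableSpace X] [MeasurableSpace Y]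
    (μ : Measure X) (a : G → X → X) (ν : Measure Y) (b : G → Y → Y)
    (F : Finset G) {k : ℕ} (P : Fin k → Set X) (Q : Fin k → Set Y) : ℝ :=
  ∑ i : Fin k, ∑ j : Fin k, ∑ f ∈ F,
    |(μ (P i ∩ actSet a f (P j))).toReal - (ν (Q i ∩ actSet b f (Q j))).toReal|

/-- `d_{F,P}(a,b)`: the infimum over `k`-atom partitions `Q` of `X_b` of
`‖c(a,F,P) - c(b,F,Q)‖₁`. -/
noncomputable def dPart {G : Type*} {X Y : Type*} [MeasurableSpace X] [MeasurableSpace Y]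
    (μ : Measure X) (a : G → X → X) (ν : Measure Y) (b : G → Y → Y)
    (F : Finset G) {k : ℕ} (P : Fin k → Set X) : ℝ :=
  sInf {r : ℝ | ∃ Q : Fin k → Set Y, IsPartition Q ∧ r = statDist μ a ν b F P Q}

/-- `d_{F,k}(a,b)`: the supremum over `k`-atom partitions `P` of `X_a` of `d_{F,P}(a,b)`. -/
noncomputable def dNum {G : Type*} {X Y : Type*} [MeasurableSpace X] [MeasurableSpace Y]
    (μ : Measure X) (a : G → X → X) (ν : Measure Y) (b : G → Y → Y)
    (F : Finset G) (k : ℕ) : ℝ :=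
  sSup {r : ℝ | ∃ P : Fin k → Set X, IsPartition P ∧ r = dPart μ a ν b F P}

/-- Weak containment `a ≺ b` of pmp actions: every finite partition of `X_a` and
every finite set of group elements can be `ε`-simulated by a partition of `X_b`. -/
def WC {G : Type*} {X Y : Type*} [MeasurableSpace X] [MeasurableSpace Y]
    (μ : Measure X) (a : G → X → X) (ν : Measure Y) (b : G → Y → Y) : Prop :=
  ∀ ε : ℝ, 0 < ε → ∀ (F : Finset G) (k : ℕ) (P : Fin k → Set X), IsPartition P →
    ∃ Q : Fin k → Set Y, IsPartition Q ∧ statDist μ a ν b F P Q ≤ ε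

/-- The measure `μ` is diffuse (atomless in the sense of measure algebras):
every non-null measurable set contains a measurable subset of strictly
intermediate measure. -/
def Diffuse {X : Type*} [MeasurableSpace X] (μ : Measure X) : Prop :=
  ∀ A : Set X, MeasurableSet A → μ A ≠ 0 →
    ∃ B : Set X, MeasurableSet B ∧ B ⊆ A ∧ 0 < μ B ∧ μ B < μ A

/-- Diffuseness relative to a sub-σ-algebra `m`. -/
def DiffuseOn {X : Type*} (m : MeasurableSpace X) {m0 : MeasurableSpace X}
    (μ : Measure X) : Prop :=
  ∀ A : Set X, MeasurableSet[m] A → μ A ≠ 0 →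
    ∃ B : Set X, MeasurableSet[m] B ∧ B ⊆ A ∧ 0 < μ B ∧ μ B < μ A

/-! The factor σ-algebra is generated by the `G`-translates of countably many sets of two kinds.
For each `k`, the statistics `μ(Pᵢ ∩ g·Pⱼ)` of `k`-atom partitions live in `ℝ^(k × k × G)`, which
is second countable because `G` is countable, so some countable family of partitions has
statistics dense among those of all partitions; their atoms make `a` weakly contained in the
factor. Since `μ` is atomless, the measurable union of all sets of measure `≤ 1/n` is conull, so
countably many of them cover `X` up to a null set; these make the factor atomless. The factor is
weakly contained in `a` for free: its partitions are partitions of `X` with the same statistics. -/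

namespace Diffuse

variable {X : Type*} [MeasurableSpace X] {μ : Measure X}

theorem exists_subset_measure_le_half (hd : Diffuse μ) {A : Set X} (hA : MeasurableSet A)
    (h0 : μ A ≠ 0) : ∃ B ⊆ A, MeasurableSet B ∧ 0 < μ B ∧ μ B ≤ μ A / 2 := by
  obtain ⟨B, hB, hBA, hB0, hBA'⟩ := hd A hA h0
  rcases le_or_gt (μ B) (μ A / 2) with hle | hlt
  · exact ⟨B, hBA, hB, hB0, hle⟩
  have hdiff : μ (A \ B) = μ A - μ B := measure_sdiff hBA hB.nullMeasurableSet hBA'.ne_top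
  refine ⟨A \ B, Set.sdiff_subset, hA.diff hB, ?_, ?_⟩
  · rw [hdiff]
    exact tsub_pos_of_lt hBA'
  · rw [hdiff, tsub_le_iff_right]
    calc μ A = μ A / 2 + μ A / 2 := (ENNReal.add_halves _).symm
      _ ≤ μ A / 2 + μ B := by gcongr

theorem exists_subset_measure_le (hd : Diffuse μ) {A : Set X} (hA : MeasurableSet A)
    (h0 : μ A ≠ 0) (hA_top : μ A ≠ ∞) {δ : ℝ≥0∞} (hδ : δ ≠ 0) :
    ∃ B ⊆ A, MeasurableSet B ∧ 0 < μ B ∧ μ B ≤ δ := by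
  have halving : ∀ k : ℕ, ∃ B ⊆ A, MeasurableSet B ∧ 0 < μ B ∧ μ B ≤ 2⁻¹ ^ k * μ A := by
    intro k
    induction k with
    | zero => exact ⟨A, subset_rfl, hA, pos_iff_ne_zero.2 h0, by simp⟩
    | succ k ih =>
      obtain ⟨B, hBA, hB, hB0, hBk⟩ := ih
      obtain ⟨C, hCB, hC, hC0, hCB'⟩ := hd.exists_subset_measure_le_half hB hB0.ne'
      refine ⟨C, hCB.trans hBA, hC, hC0, ?_⟩
      calc μ C ≤ 2⁻¹ * μ B := by rwa [← ENNReal.div_eq_inv_mul]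
        _ ≤ 2⁻¹ * (2⁻¹ ^ k * μ A) := by gcongr
        _ = 2⁻¹ ^ (k + 1) * μ A := by rw [pow_succ', mul_assoc]
  obtain ⟨k, hk⟩ := ENNReal.exists_inv_two_pow_lt (ENNReal.div_pos hδ hA_top).ne'
  obtain ⟨B, hBA, hB, hB0, hBk⟩ := halving k
  exact ⟨B, hBA, hB, hB0, hBk.trans (ENNReal.mul_lt_of_lt_div hk).le⟩

theorem exists_countable_cover_measure_le (hd : Diffuse μ) [IsFiniteMeasure μ] {δ : ℝ≥0∞}
    (hδ : δ ≠ 0) :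
    ∃ D : Set (Set X), D.Countable ∧ (∀ s ∈ D, MeasurableSet s ∧ μ s ≤ δ) ∧ μ (⋃₀ D)ᶜ = 0 := by
  obtain ⟨D, hDsmall, hDc, hcover⟩ :=
    Measure.exists_ae_subset_biUnion_countable μ (C := {s | MeasurableSet s ∧ μ s ≤ δ})
      fun s hs => hs.1
  refine ⟨D, hDc, hDsmall, ?_⟩
  by_contra h0
  have hU : MeasurableSet (⋃₀ D)ᶜ := (MeasurableSet.sUnion hDc fun s hs => (hDsmall hs).1).compl
  obtain ⟨B, hBU, hB, hB0, hBδ⟩ := hd.exists_subset_measure_le hU h0 (measure_ne_top _ _) hδ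
  have hBnull := ae_le_set.1 (hcover B ⟨hB, hBδ⟩)
  rw [sdiff_eq_left.2 (Set.subset_compl_iff_disjoint_right.1 hBU)] at hBnull
  exact hB0.ne' hBnull

end Diffuse

theorem diffuseOn_of_forall_exists_cover {X : Type*} {m m0 : MeasurableSpace X}
    {μ : Measure X}
    (h : ∀ n : ℕ, ∃ D : Set (Set X), D.Countable ∧
      (∀ s ∈ D, MeasurableSet[m] s ∧ μ s ≤ (n : ℝ≥0∞)⁻¹) ∧ μ (⋃₀ D)ᶜ = 0) :
    DiffuseOn m μ := by
  intro A hA h0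
  obtain ⟨n, hn⟩ := ENNReal.exists_inv_nat_lt h0
  obtain ⟨D, hDc, hD, hcover⟩ := h n
  obtain ⟨s, hs, hAs⟩ : ∃ s ∈ D, μ (A ∩ s) ≠ 0 := by
    by_contra! hnull
    refine h0 (measure_mono_null ?_ (measure_union_null
      ((measure_biUnion_null_iff hDc).2 hnull) hcover))
    exact fun x hx => (em (x ∈ ⋃₀ D)).imp
      (fun ⟨s, hs, hxs⟩ => Set.mem_biUnion hs ⟨hx, hxs⟩) id
  exact ⟨A ∩ s, hA.inter (hD s hs).1, Set.inter_subset_left, pos_iff_ne_zero.2 hAs,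
    (measure_mono Set.inter_subset_right).trans_lt ((hD s hs).2.trans_lt hn)⟩

namespace IsPMP

variable {G X : Type*} [Group G] [MeasurableSpace X] {μ : Measure X} {a : G → X → X}

theorem actSet_eq_preimage (ha : IsPMP μ a) (g : G) (A : Set X) :
    actSet a g A = a g⁻¹ ⁻¹' A := by
  ext x
  constructor
  · rintro ⟨y, hy, rfl⟩
    rwa [Set.mem_preimage, ← ha.2.2, inv_mul_cancel, ha.2.1]
  · intro hx
    exact ⟨a g⁻¹ x, hx, by rw [← ha.2.2, mul_inv_cancel, ha.2.1]⟩

theorem actSet_one (ha : IsPMP μ a) (A : Set X) : actSet a 1 A = A := by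
  rw [ha.actSet_eq_preimage, inv_one, funext ha.2.1, Set.preimage_id']

theorem actSet_actSet (ha : IsPMP μ a) (g h : G) (A : Set X) :
    actSet a g (actSet a h A) = actSet a (g * h) A := by
  simp only [actSet, Set.image_image, ha.2.2]

theorem measurableSet_actSet (ha : IsPMP μ a) (g : G) {A : Set X} (hA : MeasurableSet A) :
    MeasurableSet (actSet a g A) := by
  rw [ha.actSet_eq_preimage]
  exact (ha.1 g⁻¹).measurable hA

end IsPMP

def orbitSets {G X : Type*} (a : G → X → X) (S : Set (Set X)) : Set (Set X) :=
  ⋃ g, actSet a g '' S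

theorem Set.Countable.orbitSets {G X : Type*} [Countable G] {a : G → X → X} {S : Set (Set X)}
    (hS : S.Countable) : (orbitSets a S).Countable :=
  Set.countable_iUnion fun _ => hS.image _

section Orbit

variable {G X : Type*} [Group G] [mX : MeasurableSpace X] {μ : Measure X} {a : G → X → X}
  {S : Set (Set X)}

theorem IsPMP.subset_orbitSets (ha : IsPMP μ a) : S ⊆ orbitSets a S := fun s hs =>
  Set.mem_iUnion.2 ⟨1, s, hs, ha.actSet_one s⟩

theorem IsPMP.actSet_mem_orbitSets (ha : IsPMP μ a) (g : G) {t : Set X}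
    (ht : t ∈ orbitSets a S) : actSet a g t ∈ orbitSets a S := by
  obtain ⟨h, s, hs, rfl⟩ := Set.mem_iUnion.1 ht
  exact Set.mem_iUnion.2 ⟨g * h, s, hs, (ha.actSet_actSet g h s).symm⟩

theorem IsPMP.generateFrom_orbitSets_le (ha : IsPMP μ a) (hS : ∀ s ∈ S, MeasurableSet s) :
    MeasurableSpace.generateFrom (orbitSets a S) ≤ mX := by
  refine MeasurableSpace.generateFrom_le fun t ht => ?_
  obtain ⟨g, s, hs, rfl⟩ := Set.mem_iUnion.1 ht
  exact ha.measurableSet_actSet g (hS s hs)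

theorem IsPMP.measurableSet_generateFrom_orbitSets_actSet (ha : IsPMP μ a) (g : G)
    {A : Set X} (hA : MeasurableSet[MeasurableSpace.generateFrom (orbitSets a S)] A) :
    MeasurableSet[MeasurableSpace.generateFrom (orbitSets a S)] (actSet a g A) := by
  have hmeas : Measurable[MeasurableSpace.generateFrom (orbitSets a S),
      MeasurableSpace.generateFrom (orbitSets a S)] (a g⁻¹) := by
    refine @measurable_generateFrom X X (MeasurableSpace.generateFrom _) _ _ fun t ht => ?_
    rw [← inv_inv g, ← ha.actSet_eq_preimage]
    exact MeasurableSpace.measurableSet_generateFrom (ha.actSet_mem_orbitSets _ ht)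
  rw [ha.actSet_eq_preimage]
  exact hmeas hA

end Orbit

section Statistics

variable {G X Y : Type*}

noncomputable def partitionStats [MeasurableSpace X] (μ : Measure X) (a : G → X → X) {k : ℕ}
    (P : Fin k → Set X) : Fin k → Fin k → G → ℝ :=
  fun i j g => (μ (P i ∩ actSet a g (P j))).toReal

theorem wc_of_forall_partitionStats_mem_closure {mX : MeasurableSpace X} {mY : MeasurableSpace Y}
    {μ : Measure X} {a : G → X → X} {ν : Measure Y} {b : G → Y → Y}
    (h : ∀ (k : ℕ) (P : Fin k → Set X), IsPartition P →
      partitionStats μ a P ∈ closure (partitionStats ν b '' {Q : Fin k → Set Y | IsPartition Q})) :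
    WC μ a ν b := by
  intro ε hε F k P hP
  have hopen : IsOpen {v : Fin k → Fin k → G → ℝ |
      ∑ i, ∑ j, ∑ f ∈ F, |partitionStats μ a P i j f - v i j f| < ε} :=
    isOpen_lt (by fun_prop) continuous_const
  obtain ⟨_, hclose, Q, hQ, rfl⟩ :=
    mem_closure_iff.1 (h k P hP) _ hopen (by simpa using hε)
  exact ⟨Q, hQ, hclose.le⟩

theorem exists_countable_set_partitionStats_dense [Countable G] [MeasurableSpace X]
    (μ : Measure X) (a : G → X → X) (k : ℕ) :
    ∃ T : Set (Fin k → Set X), T.Countable ∧ (∀ Q ∈ T, IsPartition Q) ∧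
      ∀ P, IsPartition P → partitionStats μ a P ∈ closure (partitionStats μ a '' T) := by
  obtain ⟨V, hV, hVc, hdense⟩ := (TopologicalSpace.IsSeparable.of_separableSpace
    (partitionStats μ a '' {P : Fin k → Set X | IsPartition P})).exists_countable_dense_subset
  choose! Q hQ hQV using hV
  refine ⟨Q '' V, hVc.image Q, Set.forall_mem_image.2 hQ, fun P hP => ?_⟩
  rw [Set.image_image, Set.image_congr hQV, Set.image_id']
  exact hdense ⟨P, hP, rfl⟩

theorem IsPartition.mono {m m0 : MeasurableSpace X} (hm : m ≤ m0) {k : ℕ}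
    {P : Fin k → Set X} (hP : @IsPartition X m k P) : @IsPartition X m0 k P :=
  ⟨fun i => hm _ (hP.1 i), hP.2⟩

theorem partitionStats_trim {m m0 : MeasurableSpace X} {μ : Measure X} (hm : m ≤ m0)
    {a : G → X → X} (hinv : ∀ (g : G) (A : Set X), MeasurableSet[m] A →
      MeasurableSet[m] (actSet a g A))
    {k : ℕ} {Q : Fin k → Set X} (hQ : ∀ i, MeasurableSet[m] (Q i)) :
    @partitionStats G X m (μ.trim hm) a k Q = partitionStats μ a Q := by
  ext i j g
  simp only [partitionStats, trim_measurableSet_eq hm ((hQ i).inter (hinv g _ (hQ j)))]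

theorem wc_self_trim_of_partitionStats_dense {m m0 : MeasurableSpace X} {μ : Measure X}
    (hm : m ≤ m0) {a : G → X → X}
    (hinv : ∀ (g : G) (A : Set X), MeasurableSet[m] A → MeasurableSet[m] (actSet a g A))
    (h : ∀ (k : ℕ) (P : Fin k → Set X), @IsPartition X m0 k P →
      partitionStats μ a P ∈ closure (partitionStats μ a ''
        {Q | @IsPartition X m0 k Q ∧ ∀ i, MeasurableSet[m] (Q i)})) :
    @WC G X X m0 m μ a (μ.trim hm) a := by
  refine wc_of_forall_partitionStats_mem_closure fun k P hP => closure_mono ?_ (h k P hP)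
  rintro _ ⟨Q, ⟨hQ, hQm⟩, rfl⟩
  exact ⟨Q, ⟨hQm, hQ.2⟩, partitionStats_trim hm hinv hQm⟩

theorem wc_trim_self {m m0 : MeasurableSpace X} {μ : Measure X} (hm : m ≤ m0) {a : G → X → X}
    (hinv : ∀ (g : G) (A : Set X), MeasurableSet[m] A → MeasurableSet[m] (actSet a g A)) :
    @WC G X X m m0 (μ.trim hm) a μ a :=
  wc_of_forall_partitionStats_mem_closure fun _ P hP =>
    subset_closure ⟨P, hP.mono hm, (partitionStats_trim hm hinv hP.1).symm⟩

end Statistics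

/-- Theorem A. Every pmp action `a` of a countable group on an
atomless probability space has a countably generated, `G`-invariant, atomless
sub-σ-algebra `m` such that the corresponding factor action (the action `a` on
`(X, m, μ|_m)`) is weakly equivalent to `a`.  In particular every pmp action on an
atomless probability space is weakly equivalent to an action on a standard atomless
probability space. -/
theorem weakly_equivalent_standard_factor {G : Type*} [Group G] [Countable G]
    {X : Type*} [m0 : MeasurableSpace X]
    (μ : Measure X) [IsProbabilityMeasure μ]
    (a : G → X → X) (ha : IsPMP μ a) (hd : Diffuse μ) :
    ∃ (m : MeasurableSpace X) (hm : m ≤ m0),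
      (∃ S : Set (Set X), S.Countable ∧ m = MeasurableSpace.generateFrom S) ∧
      (∀ (g : G) (A : Set X), MeasurableSet[m] A → MeasurableSet[m] (actSet a g A)) ∧
      DiffuseOn m μ ∧
      @WC G X X m0 m μ a (μ.trim hm) a ∧
      @WC G X X m m0 (μ.trim hm) a μ a := by
  choose T hTc hTpart hTdense using exists_countable_set_partitionStats_dense μ a
  choose D hDc hD hDcover using fun n : ℕ =>
    hd.exists_countable_cover_measure_le (δ := (n : ℝ≥0∞)⁻¹) (by simp)
  set S₀ : Set (Set X) := (⋃ k, ⋃ Q ∈ T k, Set.range Q) ∪ ⋃ n, D n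
  have hS₀c : S₀.Countable :=
    (Set.countable_iUnion fun k => (hTc k).biUnion fun Q _ => Set.countable_range Q).union
      (Set.countable_iUnion hDc)
  have hS₀m : ∀ s ∈ S₀, MeasurableSet s := by
    rintro s (hs | hs)
    · obtain ⟨k, Q, hQ, i, rfl⟩ : ∃ k, ∃ Q ∈ T k, ∃ i, Q i = s := by simpa using hs
      exact (hTpart k Q hQ).1 i
    · obtain ⟨n, hs⟩ := Set.mem_iUnion.1 hs
      exact (hD n s hs).1
  have hS₀ : ∀ s ∈ S₀, MeasurableSet[MeasurableSpace.generateFrom (orbitSets a S₀)] s :=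
    fun s hs => MeasurableSpace.measurableSet_generateFrom (ha.subset_orbitSets hs)
  have hm := ha.generateFrom_orbitSets_le hS₀m
  have hinv := ha.measurableSet_generateFrom_orbitSets_actSet (S := S₀)
  refine ⟨_, hm, ⟨_, hS₀c.orbitSets, rfl⟩, hinv, ?_, ?_, ?_⟩
  · exact diffuseOn_of_forall_exists_cover fun n => ⟨D n, hDc n,
      fun s hs => ⟨hS₀ s (Or.inr (Set.mem_iUnion_of_mem n hs)), (hD n s hs).2⟩, hDcover n⟩
  · refine wc_self_trim_of_partitionStats_dense hm hinv fun k P hP =>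
      closure_mono ?_ (hTdense k P hP)
    rintro _ ⟨Q, hQ, rfl⟩
    exact ⟨Q, ⟨hTpart k Q hQ, fun i => hS₀ _ (Or.inl (Set.mem_iUnion_of_mem k
      (Set.mem_biUnion hQ (Set.mem_range_self i))))⟩, rfl⟩
  · exact wc_trim_self hm hinv
end
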